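/- arXiv:1803.06216 — 2 statements merged into one kernel-verified Lean document; each statement's English description precedes it below -/
import Mathlib

section
/- Under the setup, no mixed arc crosses a top arc: if (b₁,r₁) ∈ E' has a mixed witness u₁ and (b₂,r₂) ∈ E' has a top witness, then, writing a = min(t b₁, t r₁), γ = min(t b₂, t r₂) and δ = max(t b₂, t r₂), the open intervals (a, t u₁) and (γ, δ) do not interleave. -/
/-- The above-anchored L-frame `A(t,h,w) = ({t} × [-t, -t+h]) ∪ ([t, t+w] × {-t})`. -/
def Aframe (t h w : ℝ) : Set (ℝ × ℝ) :=
  ({t} : Set ℝ) ×ˢ Set.Icc (-t) (-t + h) ∪ Set.Icc t (t + w) ×ˢ ({-t} : Set ℝ)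

/-- The intersection graph of a family of subsets of the plane. -/
def interGraph {V : Type*} (F : V → Set (ℝ × ℝ)) : SimpleGraph V where
  Adj u v := u ≠ v ∧ (F u ∩ F v).Nonempty
  symm := by
    constructor
    intro u v h
    exact ⟨h.1.symm, by rw [Set.inter_comm]; exact h.2⟩
  loopless := by
    constructor
    intro u h
    exact h.1 rfl

/-- A set of vertices is a dominating set: every vertex is in it or adjacent to a member. -/
def IsDomSet {V : Type*} (G : SimpleGraph V) (D : Set V) : Prop :=
  ∀ v, v ∈ D ∨ ∃ u ∈ D, G.Adj u v

/-- Euclidean distance between the corners `(t b, -(t b))` and `(t r, -(t r))` of the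
L-frames indexed by `b` and `r`. -/
noncomputable def cornerDist {V : Type*} (t : V → ℝ) (b r : V) : ℝ :=
  Real.sqrt ((t b - t r) ^ 2 + ((-(t b)) - (-(t r))) ^ 2)

/-- `(b,r) ∈ S(u)`: `b ∈ B`, `r ∈ R`, and both frames `F b` and `F r` intersect `F u`. -/
def InS {V : Type*} (F : V → Set (ℝ × ℝ)) (B R : Set V) (u b r : V) : Prop :=
  b ∈ B ∧ r ∈ R ∧ (F b ∩ F u).Nonempty ∧ (F r ∩ F u).Nonempty

/-- `u` is a witness of `(b,r)`: `(b,r) ∈ S(u)` and the distance between the corners of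
`F b` and `F r` is minimum among all pairs in `S(u)`. -/
def IsWitness {V : Type*} (F : V → Set (ℝ × ℝ)) (t : V → ℝ) (B R : Set V)
    (u b r : V) : Prop :=
  InS F B R u b r ∧ ∀ b' r', InS F B R u b' r' → cornerDist t b r ≤ cornerDist t b' r'

/-- `(b,r) ∈ E'`: the pair admits a witness. -/
def InE' {V : Type*} (F : V → Set (ℝ × ℝ)) (t : V → ℝ) (B R : Set V) (b r : V) : Prop :=
  ∃ u, IsWitness F t B R u b r

/-- `u` is a top witness of `(b,r)`. -/
def TopWitness {V : Type*} (F : V → Set (ℝ × ℝ)) (t : V → ℝ) (B R : Set V)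
    (u b r : V) : Prop :=
  IsWitness F t B R u b r ∧ t b ≤ t u ∧ t r ≤ t u

/-- `u` is a down witness of `(b,r)`. -/
def DownWitness {V : Type*} (F : V → Set (ℝ × ℝ)) (t : V → ℝ) (B R : Set V)
    (u b r : V) : Prop :=
  IsWitness F t B R u b r ∧ t u ≤ t b ∧ t u ≤ t r

/-- `u` is a mixed witness of `(b,r)`. -/
def MixedWitness {V : Type*} (F : V → Set (ℝ × ℝ)) (t : V → ℝ) (B R : Set V)
    (u b r : V) : Prop :=
  IsWitness F t B R u b r ∧ min (t b) (t r) < t u ∧ t u < max (t b) (t r)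

/-- Open intervals `(p,q)` and `(r,s)` interleave. -/
def Interleave (p q r s : ℝ) : Prop :=
  (p < r ∧ r < q ∧ q < s) ∨ (r < p ∧ p < s ∧ s < q)

/-!
The corners of all frames lie on the line `y = -x`, so two frames with `t₁ < t₂` meet exactly
when the horizontal arm of the first reaches the vertical arm of the second, at `(t₂, -t₁)`.
Consequently, if `t p ≤ t c < t u ≤ t v` and both `F p, F u` and `F c, F v` meet, then
`F c` meets `F u` as well. A witness `u` of `(b, r)` cannot meet a vertex of `B ∪ R` whose
corner lies strictly between those of `b` and `r`, since substituting it would give a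
closer pair in `S(u)`. If the arcs interleaved, the transfer would produce exactly such a
vertex, for `u₁` or for the top witness `u₂`, depending on the order of `t u₁` and `t u₂`.
-/

theorem Aframe_inter_nonempty_iff {t₁ h₁ w₁ t₂ h₂ w₂ : ℝ} (hlt : t₁ < t₂) :
    (Aframe t₁ h₁ w₁ ∩ Aframe t₂ h₂ w₂).Nonempty ↔ t₂ - t₁ ≤ w₁ ∧ t₂ - t₁ ≤ h₂ := by
  constructor
  · rintro ⟨⟨x, y⟩, hx, hy⟩
    simp only [Aframe, Set.mem_union, Set.mem_prod, Set.mem_singleton_iff, Set.mem_Icc]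
      at hx hy
    rcases hx with ⟨hx1, hx2, hx3⟩ | ⟨⟨hx1, hx2⟩, hx3⟩ <;>
      rcases hy with ⟨hy1, hy2, hy3⟩ | ⟨⟨hy1, hy2⟩, hy3⟩ <;>
      constructor <;> linarith
  · rintro ⟨hw, hh⟩
    refine ⟨(t₂, -t₁), Or.inr ⟨⟨hlt.le, by linarith⟩, rfl⟩, Or.inl ⟨rfl, by linarith, by linarith⟩⟩

theorem Aframe_inter_nonempty_of_nested {tp hp wp tu hu wu tc hc wc tv hv wv : ℝ}
    (hpc : tp ≤ tc) (hcu : tc < tu) (huv : tu ≤ tv)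
    (hPU : (Aframe tp hp wp ∩ Aframe tu hu wu).Nonempty)
    (hCV : (Aframe tc hc wc ∩ Aframe tv hv wv).Nonempty) :
    (Aframe tc hc wc ∩ Aframe tu hu wu).Nonempty := by
  rw [Aframe_inter_nonempty_iff (by linarith)] at hPU hCV ⊢
  constructor <;> linarith [hPU.2, hCV.1]

theorem cornerDist_eq {V : Type*} (t : V → ℝ) (b r : V) :
    cornerDist t b r = Real.sqrt 2 * |t b - t r| := by
  rw [cornerDist, show (t b - t r) ^ 2 + (-t b - -t r) ^ 2 = 2 * (t b - t r) ^ 2 by ring,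
    Real.sqrt_mul zero_le_two, Real.sqrt_sq_eq_abs]

theorem abs_sub_lt_of_between {x p q : ℝ} (hmin : min p q < x) (hmax : x < max p q) :
    |x - q| < |p - q| ∧ |p - x| < |p - q| := by
  rcases le_total p q with hpq | hpq
  · rw [min_eq_left hpq] at hmin
    rw [max_eq_right hpq] at hmax
    rw [abs_of_nonpos (by linarith), abs_of_nonpos (by linarith), abs_of_neg (by linarith)]
    constructor <;> linarith
  · rw [min_eq_right hpq] at hmin
    rw [max_eq_left hpq] at hmax
    rw [abs_of_nonneg (by linarith), abs_of_nonneg (by linarith), abs_of_pos (by linarith)]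
    constructor <;> linarith

section Witness

variable {V : Type*} {F : V → Set (ℝ × ℝ)} {B R : Set V} {u b r c : V}

theorem InS.exists_eq_min (hS : InS F B R u b r) (t : V → ℝ) :
    ∃ c ∈ B ∪ R, (F c ∩ F u).Nonempty ∧ t c = min (t b) (t r) := by
  obtain ⟨hb, hr, hbu, hru⟩ := hS
  rcases min_cases (t b) (t r) with ⟨he, -⟩ | ⟨he, -⟩
  · exact ⟨b, Or.inl hb, hbu, he.symm⟩
  · exact ⟨r, Or.inr hr, hru, he.symm⟩

theorem InS.exists_eq_max (hS : InS F B R u b r) (t : V → ℝ) :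
    ∃ c ∈ B ∪ R, (F c ∩ F u).Nonempty ∧ t c = max (t b) (t r) := by
  obtain ⟨hb, hr, hbu, hru⟩ := hS
  rcases max_cases (t b) (t r) with ⟨he, -⟩ | ⟨he, -⟩
  · exact ⟨b, Or.inl hb, hbu, he.symm⟩
  · exact ⟨r, Or.inr hr, hru, he.symm⟩

theorem IsWitness.not_between {t : V → ℝ} (hwit : IsWitness F t B R u b r) (hc : c ∈ B ∪ R)
    (hcu : (F c ∩ F u).Nonempty) : ¬ (min (t b) (t r) < t c ∧ t c < max (t b) (t r)) := by
  rintro ⟨hmin, hmax⟩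
  obtain ⟨⟨hb, hr, hbu, hru⟩, hleast⟩ := hwit
  have hcloser := abs_sub_lt_of_between hmin hmax
  simp only [cornerDist_eq, mul_le_mul_iff_right₀ (Real.sqrt_pos.mpr zero_lt_two)] at hleast
  rcases hc with hc | hc
  · linarith [hleast c r ⟨hc, hr, hcu, hru⟩, hcloser.1]
  · linarith [hleast b c ⟨hb, hc, hbu, hcu⟩, hcloser.2]

end Witness

theorem no_mixed_arc_crosses_top_arc_general {V : Type*}
    (t h w : V → ℝ)
    (F : V → Set (ℝ × ℝ)) (hF : ∀ v, F v = Aframe (t v) (h v) (w v))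
    (B R : Set V)
    (b₁ r₁ b₂ r₂ u₁ : V)
    (h₁ : MixedWitness F t B R u₁ b₁ r₁)
    (h₂ : ∃ u₂, TopWitness F t B R u₂ b₂ r₂) :
    ¬ Interleave (min (t b₁) (t r₁)) (t u₁)
        (min (t b₂) (t r₂)) (max (t b₂) (t r₂)) := by
  obtain rfl : F = fun v => Aframe (t v) (h v) (w v) := funext hF
  obtain ⟨hwit₁, ha, hu₁⟩ := h₁
  obtain ⟨u₂, hwit₂, hb₂, hr₂⟩ := h₂
  have hδ : max (t b₂) (t r₂) ≤ t u₂ := max_le hb₂ hr₂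
  obtain ⟨p, hp, hpu₁, hpt⟩ := hwit₁.1.exists_eq_min t
  obtain ⟨c, hc, hcu₂, hct⟩ := hwit₂.1.exists_eq_min t
  obtain ⟨d, hd, hdu₂, hdt⟩ := hwit₂.1.exists_eq_max t
  rintro (⟨h1, h2, h3⟩ | ⟨h1, h2, h3⟩)
  · exact hwit₁.not_between hc
      (Aframe_inter_nonempty_of_nested (by linarith) (by linarith) (by linarith) hpu₁ hcu₂)
      ⟨by linarith, by linarith⟩
  · rcases le_or_gt (t u₁) (t u₂) with h4 | h4
    · exact hwit₁.not_between hd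
        (Aframe_inter_nonempty_of_nested (by linarith) (by linarith) h4 hpu₁ hdu₂)
        ⟨by linarith, by linarith⟩
    · exact hwit₂.not_between hp
        (Aframe_inter_nonempty_of_nested (by linarith) (by linarith) h4.le hcu₂ hpu₁)
        ⟨by linarith, by linarith⟩

/-- No mixed arc crosses a top arc. -/
theorem no_mixed_arc_crosses_top_arc {V : Type*} [Fintype V]
    (t h w : V → ℝ) (hh : ∀ v, 0 ≤ h v) (hw : ∀ v, 0 ≤ w v)
    (F : V → Set (ℝ × ℝ)) (hF : ∀ v, F v = Aframe (t v) (h v) (w v))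
    (B R : Set V) (hBR : Disjoint B R)
    (hB : IsDomSet (interGraph F) B) (hR : IsDomSet (interGraph F) R)
    (b₁ r₁ b₂ r₂ u₁ : V)
    (h₁ : MixedWitness F t B R u₁ b₁ r₁)
    (h₂ : ∃ u₂, TopWitness F t B R u₂ b₂ r₂) :
    ¬ Interleave (min (t b₁) (t r₁)) (t u₁)
        (min (t b₂) (t r₂)) (max (t b₂) (t r₂)) :=
  no_mixed_arc_crosses_top_arc_general t h w F hF B R b₁ r₁ b₂ r₂ u₁ h₁ h₂
end

section
/- Under the setup, the bipartite graph H = (B ∪ R, E') satisfies the local exchange property: for every subset B' ⊆ B, the set (B \ B') ∪ { r ∈ R : ∃ b ∈ B', (b,r) ∈ E' } is a dominating set of G. -/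
/-!
No geometry beyond the non-emptiness of the frames is needed. Every vertex `v` meets a frame
of `B` and a frame of `R`, so `S(v)` is nonempty and, `V` being finite, contains a pair
`(b, r)` of minimum corner distance; `v` is then a witness of `(b, r)`. If `b ∉ B'`, then `b`
dominates `v` from `B \ B'`; if `b ∈ B'`, then `(b, r) ∈ E'` and `r` dominates `v`.
-/

theorem corner_mem_Aframe {t h : ℝ} (w : ℝ) (hh : 0 ≤ h) : (t, -t) ∈ Aframe t h w :=
  Or.inl ⟨rfl, le_rfl, le_add_of_nonneg_right hh⟩

section IntersectionGraph

variable {V : Type*} {F : V → Set (ℝ × ℝ)} {D : Set V}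

theorem mem_or_exists_adj_of_inter_nonempty {u v : V} (hu : u ∈ D)
    (huv : (F u ∩ F v).Nonempty) : v ∈ D ∨ ∃ u ∈ D, (interGraph F).Adj u v := by
  by_cases h : u = v
  · exact Or.inl (h ▸ hu)
  · exact Or.inr ⟨u, hu, h, huv⟩

theorem IsDomSet.exists_inter_nonempty (hF : ∀ v, (F v).Nonempty)
    (hD : IsDomSet (interGraph F) D) (v : V) : ∃ d ∈ D, (F d ∩ F v).Nonempty := by
  rcases hD v with hv | ⟨u, hu, -, huv⟩
  · exact ⟨v, hv, by rw [Set.inter_self]; exact hF v⟩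
  · exact ⟨u, hu, huv⟩

theorem exists_isWitness [Finite V] (t : V → ℝ) {B R : Set V} {v b₀ r₀ : V}
    (h₀ : InS F B R v b₀ r₀) : ∃ b r, IsWitness F t B R v b r := by
  obtain ⟨⟨b, r⟩, hbr, hmin⟩ :=
    Set.exists_min_image {p : V × V | InS F B R v p.1 p.2} (fun p => cornerDist t p.1 p.2)
      (Set.toFinite _) ⟨(b₀, r₀), h₀⟩
  exact ⟨b, r, hbr, fun b' r' h' => hmin (b', r') h'⟩

end IntersectionGraph

theorem local_exchange_property_general {V : Type*} [Fintype V]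
    (t h w : V → ℝ) (hh : ∀ v, 0 ≤ h v)
    (F : V → Set (ℝ × ℝ)) (hF : ∀ v, F v = Aframe (t v) (h v) (w v))
    (B R : Set V)
    (hB : IsDomSet (interGraph F) B) (hR : IsDomSet (interGraph F) R)
    (B' : Set V) :
    IsDomSet (interGraph F)
      ((B \ B') ∪ {r | r ∈ R ∧ ∃ b ∈ B', InE' F t B R b r}) := by
  intro v
  have hne : ∀ u, (F u).Nonempty := fun u => ⟨_, hF u ▸ corner_mem_Aframe (w u) (hh u)⟩
  obtain ⟨b₀, hb₀, hb₀v⟩ := hB.exists_inter_nonempty hne v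
  obtain ⟨r₀, hr₀, hr₀v⟩ := hR.exists_inter_nonempty hne v
  obtain ⟨b, r, hwit⟩ := exists_isWitness t ⟨hb₀, hr₀, hb₀v, hr₀v⟩
  obtain ⟨hb, hr, hbv, hrv⟩ := hwit.1
  by_cases hbB' : b ∈ B'
  · exact mem_or_exists_adj_of_inter_nonempty (Or.inr ⟨hr, b, hbB', v, hwit⟩) hrv
  · exact mem_or_exists_adj_of_inter_nonempty (Or.inl ⟨hb, hbB'⟩) hbv

/-- The bipartite graph `H = (B ∪ R, E')` satisfies the local exchange property: for every
`B' ⊆ B`, the set `(B \ B') ∪ N_H(B')` is a dominating set of `G`. -/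
theorem local_exchange_property {V : Type*} [Fintype V]
    (t h w : V → ℝ) (hh : ∀ v, 0 ≤ h v) (hw : ∀ v, 0 ≤ w v)
    (F : V → Set (ℝ × ℝ)) (hF : ∀ v, F v = Aframe (t v) (h v) (w v))
    (B R : Set V) (hBR : Disjoint B R)
    (hB : IsDomSet (interGraph F) B) (hR : IsDomSet (interGraph F) R)
    (B' : Set V) (hB' : B' ⊆ B) :
    IsDomSet (interGraph F)
      ((B \ B') ∪ {r | r ∈ R ∧ ∃ b ∈ B', InE' F t B R b r}) :=
  local_exchange_property_general t h w hh F hF B R hB hR B'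
end
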